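/- Let d ≥ 2, let α ∈ (0,∞)^d, N ∈ ℕ, and let r, s ∈ ℕ^d with |r| = |s| = N. Then for every m ∈ ℕ one has ∫∫ ξ^α_m(x,y) D_{α+r}(dx) D_{α+s}(dy) = ξ^{H,α}_m(r,s); consequently, for every 0 ≤ n ≤ N the Hahn polynomial kernel satisfies H^α_n(r,s) = ((|α|+N)_(n)/N_[n]) ∫∫ Q^α_n(x,y) D_{α+r}(dx) D_{α+s}(dy). -/

import Mathlib

open MeasureTheory Finset

noncomputable section

/-- Rising factorial `(a)_(n) = a (a+1) ⋯ (a+n−1)`. -/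
def rf (a : ℝ) : ℕ → ℝ
  | 0 => 1
  | n + 1 => rf a n * (a + n)

/-- Falling factorial `N_[n] = N (N−1) ⋯ (N−n+1)` of a natural number, as a real. -/
def ff (N n : ℕ) : ℝ := (N.descFactorial n : ℝ)

/-- Triangular array `a^θ_{n,m}` (meaningful for `0 ≤ m ≤ n`). -/
def acoef (θ : ℝ) (n m : ℕ) : ℝ :=
  if n = 0 then 1
  else (θ + 2 * n - 1) * (-1 : ℝ) ^ (n - m) * rf (θ + m) (n - 1) /
    ((m.factorial : ℝ) * ((n - m).factorial : ℝ))

/-- The simplex `Δ_{d−1} = {x ∈ [0,1]^d : x₁ + ⋯ + x_d = 1}`. -/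
def simplex (d : ℕ) : Set (Fin d → ℝ) :=
  {x | (∀ i, 0 ≤ x i ∧ x i ≤ 1) ∧ ∑ i, x i = 1}

/-- `ξ^α_m(x,y)`. -/
def xiK {d : ℕ} (α : Fin d → ℝ) (m : ℕ) (x y : Fin d → ℝ) : ℝ :=
  ∑ l ∈ Finset.Nat.antidiagonalTuple d m,
    ((m.factorial : ℝ) / ∏ i, ((l i).factorial : ℝ)) *
      (rf (∑ i, α i) m / ∏ i, rf (α i) (l i)) * ∏ i, (x i * y i) ^ l i

/-- Jacobi polynomial kernel `Q^α_n(x,y)`. -/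
def Qker {d : ℕ} (α : Fin d → ℝ) (n : ℕ) (x y : Fin d → ℝ) : ℝ :=
  ∑ m ∈ Finset.range (n + 1), acoef (∑ i, α i) n m * xiK α m x y

/-- Dirichlet–multinomial pmf `DM_α(l; m)`. -/
def DM {d : ℕ} (α : Fin d → ℝ) (l : Fin d → ℕ) (m : ℕ) : ℝ :=
  ((m.factorial : ℝ) / ∏ i, ((l i).factorial : ℝ)) *
    (∏ i, rf (α i) (l i)) / rf (∑ i, α i) m

/-- `ξ^{H,α}_m(r,s)`. -/
def xiH {d : ℕ} (α : Fin d → ℝ) (m : ℕ) (r s : Fin d → ℕ) : ℝ :=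
  ∑ l ∈ Finset.Nat.antidiagonalTuple d m,
    DM (fun i => α i + r i) l m * DM (fun i => α i + s i) l m / DM α l m

/-- Hahn polynomial kernel `H^α_n(r,s)` for `|r| = |s| = N`. -/
def Hker {d : ℕ} (α : Fin d → ℝ) (N n : ℕ) (r s : Fin d → ℕ) : ℝ :=
  (rf ((∑ i, α i) + N) n / ff N n) *
    ∑ m ∈ Finset.range (n + 1), acoef (∑ i, α i) n m * xiH α m r s

/-- `χ^{H,α}_m(r,s)`. -/
def chiH {d : ℕ} (α : Fin d → ℝ) (N m : ℕ) (r s : Fin d → ℕ) : ℝ :=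
  ∑ l ∈ Finset.Nat.antidiagonalTuple d m,
    (1 / DM α l m) *
      (((m.factorial : ℝ) / ∏ i, ((l i).factorial : ℝ)) * (∏ i, ff (r i) (l i)) / ff N m) *
      (((m.factorial : ℝ) / ∏ i, ((l i).factorial : ℝ)) * (∏ i, ff (s i) (l i)) / ff N m)

/-- Normalized Jacobi polynomial `R_n^{a,b}` on `[0,1]`. -/
def Rpoly (a b : ℝ) (n : ℕ) (x : ℝ) : ℝ :=
  ∑ k ∈ Finset.range (n + 1),
    (-1 : ℝ) ^ k * (n.choose k : ℝ) * (rf ((n : ℝ) + (a + b) - 1) k / rf b k) * (1 - x) ^ k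

/-- `ζ_n^{a,b}`. -/
def zeta (a b : ℝ) (n : ℕ) : ℝ :=
  if n = 0 then 1
  else ((a + b) + 2 * n - 1) * rf (a + b) (n - 1) * rf b n / ((n.factorial : ℝ) * rf a n)

/-- Hahn polynomial `h_n^{a,b}(r; N)`. -/
def hahnPoly (a b : ℝ) (N n r : ℕ) : ℝ :=
  ∑ k ∈ Finset.range (n + 1),
    (-1 : ℝ) ^ k * (n.choose k : ℝ) * rf ((n : ℝ) + (a + b) - 1) k * ff r k /
      (rf a k * ff N k)

/-- `u^{a,b}_{N,n}`. -/
def uCoef (a b : ℝ) (N n : ℕ) : ℝ :=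
  if n = 0 then 1
  else (N.choose n : ℝ) * ((a + b) + 2 * n - 1) * rf (a + b) (n - 1) * rf a n /
    (rf ((a + b) + N) n * rf b n)

/-- Beta function `B(a,b) = Γ(a)Γ(b)/Γ(a+b)`. -/
def BetaFn (a b : ℝ) : ℝ := Real.Gamma a * Real.Gamma b / Real.Gamma (a + b)

/-- Condition (G) on the parameter vector `α`. -/
def CondG {d : ℕ} (α : Fin d → ℝ) : Prop :=
  ∀ j : Fin d, 0 < (j : ℕ) →
    (α j ≤ ∑ i ∈ Finset.univ.filter fun i : Fin d => (i : ℕ) < (j : ℕ), α i) ∧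
      (1 / 2 ≤ α j ∨ 2 ≤ ∑ i ∈ Finset.univ.filter fun i : Fin d => (i : ℕ) ≤ (j : ℕ), α i)

/-- Density of the Dirichlet distribution in the coordinates `(u₁, …, u_{d−1})`. -/
def dirichletDensity (k : ℕ) (α : Fin (k + 1) → ℝ) (u : Fin k → ℝ) : ℝ :=
  if (∀ i, 0 < u i ∧ u i < 1) ∧ ∑ i, u i < 1 then
    (Real.Gamma (∑ i, α i) / ∏ i, Real.Gamma (α i)) *
      (∏ i : Fin k, u i ^ (α (Fin.castSucc i) - 1)) * (1 - ∑ i, u i) ^ (α (Fin.last k) - 1)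
  else 0

/-- The Dirichlet probability measure `D_α` on `Δ_{d−1} ⊆ ℝ^d`, `d = k + 1`. -/
def dirichlet (k : ℕ) (α : Fin (k + 1) → ℝ) : Measure (Fin (k + 1) → ℝ) :=
  ((volume : Measure (Fin k → ℝ)).withDensity fun u =>
      ENNReal.ofReal (dirichletDensity k α u)).map fun u => Fin.snoc u (1 - ∑ i, u i)

/-!
Under `D_β` the monomial `x^l` has mean `(β)_l / (|β|)_(|l|)`: the Dirichlet density times `x^l`
is this constant times the Dirichlet density with parameter `β + l`, and every Dirichlet density
has total mass one. The latter goes by induction on the dimension: integrating out the last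
coordinate leaves a Beta density rescaled to `(0, 1 - ∑ v)` times the Dirichlet density with the
last two parameters merged. Expanding `ξ^α_m(x,y)` in monomials and integrating term by term
against `D_{α+r}` and `D_{α+s}` gives the sum defining `ξ^{H,α}_m(r,s)`, because `DM_β(l;m)` is
the multinomial coefficient times this moment; the identity for `Q^α_n` follows by linearity.
-/

open ProbabilityTheory
open scoped ENNReal

lemma rf_pos {a : ℝ} (ha : 0 < a) : ∀ n, 0 < rf a n
  | 0 => one_pos
  | n + 1 => mul_pos (rf_pos ha n) (by positivity)

lemma Gamma_add_nat_eq_rf_mul {a : ℝ} (ha : 0 < a) :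
    ∀ n : ℕ, Real.Gamma (a + n) = rf a n * Real.Gamma a
  | 0 => by simp [rf]
  | n + 1 => by
    rw [Nat.cast_succ, ← add_assoc, Real.Gamma_add_one (by positivity),
      Gamma_add_nat_eq_rf_mul ha n, rf]
    ring

lemma lintegral_inv_mul_betaPDFReal_div {a b S : ℝ} (ha : 0 < a) (hb : 0 < b) (hS : 0 < S) :
    ∫⁻ t, ENNReal.ofReal (S⁻¹ * betaPDFReal a b (t / S)) = 1 := by
  have hpdf : Measurable (betaPDF a b) := (measurable_betaPDFReal a b).ennreal_ofReal
  simp_rw [ENNReal.ofReal_mul (inv_nonneg.2 hS.le), div_eq_inv_mul]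
  rw [lintegral_const_mul' _ _ ENNReal.ofReal_ne_top]
  change _ * ∫⁻ t, betaPDF a b (S⁻¹ * t) = 1
  rw [← lintegral_map hpdf (measurable_const_mul S⁻¹),
    Real.map_volume_mul_left (inv_ne_zero hS.ne'), lintegral_smul_measure,
    lintegral_betaPDF_eq_one ha hb, inv_inv, abs_of_pos hS, smul_eq_mul, mul_one,
    ← ENNReal.ofReal_mul (inv_nonneg.2 hS.le), inv_mul_cancel₀ hS.ne', ENNReal.ofReal_one]

section DirichletDensity

variable {k : ℕ}

def openCornerSimplex (k : ℕ) : Set (Fin k → ℝ) := {u | (∀ i, 0 < u i) ∧ ∑ i, u i < 1}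

lemma dirichletDensity_of_mem {α : Fin (k + 1) → ℝ} {u : Fin k → ℝ}
    (hu : u ∈ openCornerSimplex k) :
    dirichletDensity k α u = (Real.Gamma (∑ i, α i) / ∏ i, Real.Gamma (α i)) *
      (∏ i : Fin k, u i ^ (α (Fin.castSucc i) - 1)) *
        (1 - ∑ i, u i) ^ (α (Fin.last k) - 1) := by
  refine if_pos ⟨fun i => ⟨hu.1 i, ?_⟩, hu.2⟩
  calc u i ≤ ∑ j, u j := single_le_sum (fun j _ => (hu.1 j).le) (mem_univ i)
    _ < 1 := hu.2

lemma dirichletDensity_of_notMem {α : Fin (k + 1) → ℝ} {u : Fin k → ℝ}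
    (hu : u ∉ openCornerSimplex k) : dirichletDensity k α u = 0 :=
  if_neg fun h => hu ⟨fun i => (h.1 i).1, h.2⟩

lemma measurable_dirichletDensity (α : Fin (k + 1) → ℝ) :
    Measurable (dirichletDensity k α) := by
  unfold dirichletDensity
  refine Measurable.ite (measurableSet_setOfPred.2 ?_) ?_ measurable_const <;> fun_prop

lemma dirichletDensity_nonneg {α : Fin (k + 1) → ℝ} (hα : ∀ i, 0 < α i)
    (u : Fin k → ℝ) :
    0 ≤ dirichletDensity k α u := by
  by_cases hu : u ∈ openCornerSimplex k
  · rw [dirichletDensity_of_mem hu]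
    have := Real.Gamma_pos_of_pos (sum_pos (fun i _ => hα i) univ_nonempty)
    have := prod_pos fun i (_ : i ∈ univ) => Real.Gamma_pos_of_pos (hα i)
    have := prod_nonneg fun i (_ : i ∈ univ) =>
      Real.rpow_nonneg (hu.1 i).le (α (Fin.castSucc i) - 1)
    have := Real.rpow_nonneg (sub_pos.2 hu.2).le (α (Fin.last k) - 1)
    positivity
  · rw [dirichletDensity_of_notMem hu]

lemma sum_snoc (v : Fin k → ℝ) (t : ℝ) :
    ∑ i, (Fin.snoc v t : Fin (k + 1) → ℝ) i = ∑ j, v j + t := by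
  simp [Fin.sum_univ_castSucc]

lemma snoc_mem_openCornerSimplex_iff {v : Fin k → ℝ} {t : ℝ} :
    (Fin.snoc v t : Fin (k + 1) → ℝ) ∈ openCornerSimplex (k + 1) ↔
      v ∈ openCornerSimplex k ∧ t ∈ Set.Ioo 0 (1 - ∑ j, v j) := by
  simp only [openCornerSimplex, Set.mem_ofPred_eq, Fin.forall_fin_succ', Fin.snoc_castSucc,
    Fin.snoc_last, sum_snoc, Set.mem_Ioo]
  constructor
  · rintro ⟨⟨hv, ht⟩, hsum⟩
    exact ⟨⟨hv, by linarith⟩, ht, by linarith⟩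
  · rintro ⟨⟨hv, -⟩, ht, hlt⟩
    exact ⟨⟨hv, ht⟩, by linarith⟩

def mergeLast (α : Fin (k + 2) → ℝ) : Fin (k + 1) → ℝ :=
  Fin.snoc (fun j : Fin k => α j.castSucc.castSucc)
    (α (Fin.last k).castSucc + α (Fin.last (k + 1)))

lemma mergeLast_pos {α : Fin (k + 2) → ℝ} (hα : ∀ i, 0 < α i) :
    ∀ i, 0 < mergeLast α i :=
  Fin.lastCases (by simpa [mergeLast] using add_pos (hα _) (hα _))
    fun j => by simpa [mergeLast] using hα _

lemma dirichletDensity_snoc {α : Fin (k + 2) → ℝ} (hα : ∀ i, 0 < α i) (v : Fin k → ℝ)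
    (t : ℝ) :
    dirichletDensity (k + 1) α (Fin.snoc v t) =
      dirichletDensity k (mergeLast α) v * ((1 - ∑ j, v j)⁻¹ *
        betaPDFReal (α (Fin.last k).castSucc) (α (Fin.last (k + 1))) (t / (1 - ∑ j, v j))) := by
  by_cases hv : v ∈ openCornerSimplex k
  swap
  · rw [dirichletDensity_of_notMem (by simp [snoc_mem_openCornerSimplex_iff, hv]),
      dirichletDensity_of_notMem hv, zero_mul]
  set S := 1 - ∑ j, v j with hS_def
  have hS : 0 < S := sub_pos.2 hv.2
  by_cases ht : t ∈ Set.Ioo 0 S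
  swap
  · have hpdf : ¬(0 < t / S ∧ t / S < 1) := by
      rwa [div_pos_iff_of_pos_right hS, div_lt_one hS]
    rw [dirichletDensity_of_notMem fun h => ht (snoc_mem_openCornerSimplex_iff.1 h).2,
      betaPDFReal, if_neg hpdf, mul_zero, mul_zero]
  obtain ⟨ht0, htS⟩ := ht
  rw [dirichletDensity_of_mem (snoc_mem_openCornerSimplex_iff.2 ⟨hv, ht0, htS⟩),
    dirichletDensity_of_mem hv, betaPDFReal, if_pos ⟨div_pos ht0 hS, (div_lt_one hS).2 htS⟩,
    sum_snoc, show 1 - (∑ j, v j + t) = S - t by ring]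
  simp only [mergeLast, Fin.sum_univ_castSucc, Fin.prod_univ_castSucc, Fin.snoc_castSucc,
    Fin.snoc_last]
  set a := α (Fin.last k).castSucc
  set b := α (Fin.last (k + 1))
  have hpow : S ^ (a + b - 1) = S ^ (a - 1) * S ^ (b - 1) * S := by
    rw [← Real.rpow_add hS, ← Real.rpow_add_one hS.ne']; ring_nf
  have ht_pow : (t / S) ^ (a - 1) = t ^ (a - 1) / S ^ (a - 1) := Real.div_rpow ht0.le hS.le _
  have hSt_pow : (1 - t / S) ^ (b - 1) = (S - t) ^ (b - 1) / S ^ (b - 1) := by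
    rw [one_sub_div hS.ne', Real.div_rpow (by linarith) hS.le]
  rw [hpow, ht_pow, hSt_pow, beta]
  have : 0 < Real.Gamma a := Real.Gamma_pos_of_pos (hα _)
  have : 0 < Real.Gamma b := Real.Gamma_pos_of_pos (hα _)
  have : 0 < Real.Gamma (a + b) := Real.Gamma_pos_of_pos (add_pos (hα _) (hα _))
  have := Real.rpow_pos_of_pos hS (a - 1)
  have := Real.rpow_pos_of_pos hS (b - 1)
  field_simp
  rw [add_assoc, mul_comm]

lemma lintegral_dirichletDensity_snoc {α : Fin (k + 2) → ℝ} (hα : ∀ i, 0 < α i)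
    (v : Fin k → ℝ) :
    ∫⁻ t, ENNReal.ofReal (dirichletDensity (k + 1) α (Fin.snoc v t)) =
      ENNReal.ofReal (dirichletDensity k (mergeLast α) v) := by
  by_cases hv : v ∈ openCornerSimplex k
  · simp_rw [dirichletDensity_snoc hα,
      ENNReal.ofReal_mul (dirichletDensity_nonneg (mergeLast_pos hα) v)]
    rw [lintegral_const_mul' _ _ ENNReal.ofReal_ne_top,
      lintegral_inv_mul_betaPDFReal_div (hα _) (hα _) (sub_pos.2 hv.2), mul_one]
  · simp [dirichletDensity_snoc hα, dirichletDensity_of_notMem hv]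

lemma lintegral_eq_lintegral_lintegral_snoc {f : (Fin (k + 1) → ℝ) → ℝ≥0∞}
    (hf : Measurable f) :
    ∫⁻ u, f u = ∫⁻ v, ∫⁻ t, f (Fin.snoc v t) := by
  have he := (volume_preserving_piFinSuccAbove (fun _ : Fin (k + 1) => ℝ) (Fin.last k)).symm
  rw [← he.lintegral_comp hf]
  refine (lintegral_prod_symm' _ (hf.comp he.measurable)).trans ?_
  simp [MeasurableEquiv.piFinSuccAbove_symm_apply, Fin.insertNthEquiv, Fin.insertNth_last']

theorem lintegral_dirichletDensity :
    ∀ (k : ℕ) {α : Fin (k + 1) → ℝ}, (∀ i, 0 < α i) →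
      ∫⁻ u, ENNReal.ofReal (dirichletDensity k α u) = 1
  | 0, α, hα => by
    have hone : ∀ u : Fin 0 → ℝ, dirichletDensity 0 α u = 1 := fun u => by
      rw [dirichletDensity_of_mem ⟨finZeroElim, by simp⟩]
      simp [(Real.Gamma_pos_of_pos (hα 0)).ne']
    simp [hone, volume_pi]
  | k + 1, α, hα => by
    rw [lintegral_eq_lintegral_lintegral_snoc (measurable_dirichletDensity α).ennreal_ofReal]
    simp_rw [lintegral_dirichletDensity_snoc hα]
    exact lintegral_dirichletDensity k (mergeLast_pos hα)

lemma integrable_dirichletDensity {α : Fin (k + 1) → ℝ} (hα : ∀ i, 0 < α i) :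
    Integrable (dirichletDensity k α) := by
  refine ⟨(measurable_dirichletDensity α).aestronglyMeasurable, ?_⟩
  rw [hasFiniteIntegral_iff_ofReal (ae_of_all _ (dirichletDensity_nonneg hα)),
    lintegral_dirichletDensity k hα]
  exact ENNReal.one_lt_top

lemma integral_dirichletDensity {α : Fin (k + 1) → ℝ} (hα : ∀ i, 0 < α i) :
    ∫ u, dirichletDensity k α u = 1 := by
  rw [integral_eq_lintegral_of_nonneg_ae (ae_of_all _ (dirichletDensity_nonneg hα))
    (measurable_dirichletDensity α).aestronglyMeasurable, lintegral_dirichletDensity k hα,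
    ENNReal.toReal_one]

end DirichletDensity

def dirichletMoment {ι : Type*} [Fintype ι] (β : ι → ℝ) (l : ι → ℕ) : ℝ :=
  (∏ i, rf (β i) (l i)) / rf (∑ i, β i) (∑ i, l i)

lemma Gamma_sum_div_prod_Gamma_eq_dirichletMoment_mul {ι : Type*} [Fintype ι] [Nonempty ι]
    {β : ι → ℝ} (hβ : ∀ i, 0 < β i) (l : ι → ℕ) :
    Real.Gamma (∑ i, β i) / ∏ i, Real.Gamma (β i) =
      dirichletMoment β l *
        (Real.Gamma (∑ i, (β i + l i)) / ∏ i, Real.Gamma (β i + l i)) := by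
  have hsum : 0 < ∑ i, β i := sum_pos (fun i _ => hβ i) univ_nonempty
  rw [sum_add_distrib, ← Nat.cast_sum, Gamma_add_nat_eq_rf_mul hsum,
    prod_congr rfl fun i _ => Gamma_add_nat_eq_rf_mul (hβ i) (l i), prod_mul_distrib,
    dirichletMoment]
  have := rf_pos hsum (∑ i, l i)
  have := Real.Gamma_pos_of_pos hsum
  have := prod_pos fun i (_ : i ∈ univ) => rf_pos (hβ i) (l i)
  have := prod_pos fun i (_ : i ∈ univ) => Real.Gamma_pos_of_pos (hβ i)
  field_simp

section DirichletMoments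

variable {k : ℕ}

def toSimplex (k : ℕ) (u : Fin k → ℝ) : Fin (k + 1) → ℝ := Fin.snoc u (1 - ∑ i, u i)

lemma measurable_toSimplex (k : ℕ) : Measurable (toSimplex k) :=
  measurable_pi_iff.2 <| Fin.lastCases (by simpa [toSimplex] using by fun_prop)
    fun j => by simpa [toSimplex] using measurable_pi_apply j

lemma dirichlet_eq_map (α : Fin (k + 1) → ℝ) :
    dirichlet k α = ((volume : Measure (Fin k → ℝ)).withDensity fun u =>
      ENNReal.ofReal (dirichletDensity k α u)).map (toSimplex k) := rfl

lemma integrable_dirichlet_iff {β : Fin (k + 1) → ℝ} (hβ : ∀ i, 0 < β i)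
    {f : (Fin (k + 1) → ℝ) → ℝ} (hf : Measurable f) :
    Integrable f (dirichlet k β) ↔
      Integrable fun u => dirichletDensity k β u * f (toSimplex k u) := by
  rw [dirichlet_eq_map, integrable_map_measure hf.aestronglyMeasurable
      (measurable_toSimplex k).aemeasurable,
    integrable_withDensity_iff (measurable_dirichletDensity β).ennreal_ofReal
      (ae_of_all _ fun _ => ENNReal.ofReal_lt_top)]
  simp_rw [Function.comp, ENNReal.toReal_ofReal (dirichletDensity_nonneg hβ _), mul_comm]

lemma integral_dirichlet {β : Fin (k + 1) → ℝ} (hβ : ∀ i, 0 < β i)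
    {f : (Fin (k + 1) → ℝ) → ℝ} (hf : Measurable f) :
    ∫ x, f x ∂dirichlet k β = ∫ u, dirichletDensity k β u * f (toSimplex k u) := by
  rw [dirichlet_eq_map, integral_map (measurable_toSimplex k).aemeasurable
      hf.aestronglyMeasurable,
    integral_withDensity_eq_integral_toReal_smul (measurable_dirichletDensity β).ennreal_ofReal
      (ae_of_all _ fun _ => ENNReal.ofReal_lt_top)]
  simp_rw [ENNReal.toReal_ofReal (dirichletDensity_nonneg hβ _), smul_eq_mul]

lemma dirichletDensity_mul_monomial {β : Fin (k + 1) → ℝ} (hβ : ∀ i, 0 < β i)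
    (l : Fin (k + 1) → ℕ) (u : Fin k → ℝ) :
    dirichletDensity k β u * ∏ i, toSimplex k u i ^ l i =
      dirichletMoment β l * dirichletDensity k (fun i => β i + l i) u := by
  by_cases hu : u ∈ openCornerSimplex k
  · have hlast : 0 < 1 - ∑ j, u j := sub_pos.2 hu.2
    have hsplit {x : ℝ} (hx : 0 < x) (b : ℝ) (n : ℕ) :
        x ^ (b + n - 1) = x ^ (b - 1) * x ^ n := by
      rw [← Real.rpow_natCast, ← Real.rpow_add hx]
      ring_nf
    have hprod : ∏ j : Fin k, u j ^ (β j.castSucc + l j.castSucc - 1) =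
        (∏ j : Fin k, u j ^ (β j.castSucc - 1)) * ∏ j : Fin k, u j ^ l j.castSucc := by
      rw [← prod_mul_distrib]
      exact prod_congr rfl fun j _ => hsplit (hu.1 j) _ _
    rw [dirichletDensity_of_mem hu, dirichletDensity_of_mem hu,
      Gamma_sum_div_prod_Gamma_eq_dirichletMoment_mul hβ l]
    simp only [toSimplex, Fin.prod_univ_castSucc, Fin.snoc_castSucc, Fin.snoc_last]
    rw [hprod, hsplit hlast]
    ring
  · simp [dirichletDensity_of_notMem hu]

variable {β : Fin (k + 1) → ℝ}

lemma add_natCast_pos (hβ : ∀ i, 0 < β i) (l : Fin (k + 1) → ℕ) : ∀ i, 0 < β i + l i :=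
  fun i => add_pos_of_pos_of_nonneg (hβ i) (Nat.cast_nonneg _)

lemma measurable_monomial (l : Fin (k + 1) → ℕ) :
    Measurable fun x : Fin (k + 1) → ℝ => ∏ i, x i ^ l i := by
  fun_prop

lemma integrable_monomial_dirichlet (hβ : ∀ i, 0 < β i) (l : Fin (k + 1) → ℕ) :
    Integrable (fun x => ∏ i, x i ^ l i) (dirichlet k β) := by
  rw [integrable_dirichlet_iff hβ (measurable_monomial l)]
  simp_rw [dirichletDensity_mul_monomial hβ l]
  exact (integrable_dirichletDensity (add_natCast_pos hβ l)).const_mul _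

lemma integral_monomial_dirichlet (hβ : ∀ i, 0 < β i) (l : Fin (k + 1) → ℕ) :
    ∫ x, ∏ i, x i ^ l i ∂dirichlet k β = dirichletMoment β l := by
  rw [integral_dirichlet hβ (measurable_monomial l)]
  simp_rw [dirichletDensity_mul_monomial hβ l]
  rw [integral_const_mul, integral_dirichletDensity (add_natCast_pos hβ l), mul_one]

lemma integrable_polynomial_dirichlet (hβ : ∀ i, 0 < β i) (T : Finset (Fin (k + 1) → ℕ))
    (c : (Fin (k + 1) → ℕ) → ℝ) :
    Integrable (fun x => ∑ l ∈ T, c l * ∏ i, x i ^ l i) (dirichlet k β) :=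
  integrable_finsetSum _ fun l _ => (integrable_monomial_dirichlet hβ l).const_mul _

lemma integral_polynomial_dirichlet (hβ : ∀ i, 0 < β i) (T : Finset (Fin (k + 1) → ℕ))
    (c : (Fin (k + 1) → ℕ) → ℝ) :
    ∫ x, ∑ l ∈ T, c l * ∏ i, x i ^ l i ∂dirichlet k β =
      ∑ l ∈ T, c l * dirichletMoment β l := by
  rw [integral_finsetSum _ fun l _ => (integrable_monomial_dirichlet hβ l).const_mul _]
  simp_rw [integral_const_mul, integral_monomial_dirichlet hβ]

end DirichletMoments

lemma DM_eq_mul_dirichletMoment {d m : ℕ} (β : Fin d → ℝ) {l : Fin d → ℕ}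
    (hl : ∑ i, l i = m) :
    DM β l m = ((m.factorial : ℝ) / ∏ i, ((l i).factorial : ℝ)) * dirichletMoment β l := by
  rw [DM, dirichletMoment, hl, mul_div_assoc]

lemma xiK_eq_sum {d : ℕ} (α : Fin d → ℝ) (m : ℕ) (x y : Fin d → ℝ) :
    xiK α m x y = ∑ l ∈ Finset.Nat.antidiagonalTuple d m,
      (((m.factorial : ℝ) / ∏ i, ((l i).factorial : ℝ)) / dirichletMoment α l *
        ∏ i, x i ^ l i) * ∏ i, y i ^ l i := by
  refine sum_congr rfl fun l hl => ?_
  rw [dirichletMoment, Finset.Nat.mem_antidiagonalTuple.1 hl, div_div_eq_mul_div]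
  simp_rw [mul_pow, prod_mul_distrib]
  ring

lemma xiH_eq_sum {d : ℕ} (α : Fin d → ℝ) (m : ℕ) (r s : Fin d → ℕ) :
    xiH α m r s = ∑ l ∈ Finset.Nat.antidiagonalTuple d m,
      ((m.factorial : ℝ) / ∏ i, ((l i).factorial : ℝ)) / dirichletMoment α l *
        dirichletMoment (fun i => α i + s i) l * dirichletMoment (fun i => α i + r i) l := by
  refine sum_congr rfl fun l hl => ?_
  have hsum := Finset.Nat.mem_antidiagonalTuple.1 hl
  have : ((m.factorial : ℝ) / ∏ i, ((l i).factorial : ℝ)) ≠ 0 := by positivity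
  rw [DM_eq_mul_dirichletMoment _ hsum, DM_eq_mul_dirichletMoment _ hsum,
    DM_eq_mul_dirichletMoment _ hsum]
  field_simp

section Kernels

variable {k : ℕ} {γ δ : Fin (k + 1) → ℝ}

lemma integrable_xiK_dirichlet (α : Fin (k + 1) → ℝ) (hδ : ∀ i, 0 < δ i) (m : ℕ)
    (x : Fin (k + 1) → ℝ) : Integrable (fun y => xiK α m x y) (dirichlet k δ) := by
  simp_rw [xiK_eq_sum]
  exact integrable_polynomial_dirichlet hδ _ _

lemma integral_xiK_dirichlet (α : Fin (k + 1) → ℝ) (hδ : ∀ i, 0 < δ i) (m : ℕ)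
    (x : Fin (k + 1) → ℝ) :
    ∫ y, xiK α m x y ∂dirichlet k δ = ∑ l ∈ Finset.Nat.antidiagonalTuple (k + 1) m,
      ((m.factorial : ℝ) / ∏ i, ((l i).factorial : ℝ)) / dirichletMoment α l *
        dirichletMoment δ l * ∏ i, x i ^ l i := by
  simp_rw [xiK_eq_sum]
  rw [integral_polynomial_dirichlet hδ]
  exact sum_congr rfl fun l _ => by ring

lemma integrable_integral_xiK_dirichlet (α : Fin (k + 1) → ℝ) (hγ : ∀ i, 0 < γ i)
    (hδ : ∀ i, 0 < δ i) (m : ℕ) :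
    Integrable (fun x => ∫ y, xiK α m x y ∂dirichlet k δ) (dirichlet k γ) := by
  simp_rw [integral_xiK_dirichlet α hδ]
  exact integrable_polynomial_dirichlet hγ _ _

lemma integral_integral_xiK_dirichlet (α : Fin (k + 1) → ℝ) (hγ : ∀ i, 0 < γ i)
    (hδ : ∀ i, 0 < δ i) (m : ℕ) :
    ∫ x, ∫ y, xiK α m x y ∂dirichlet k δ ∂dirichlet k γ =
      ∑ l ∈ Finset.Nat.antidiagonalTuple (k + 1) m,
        ((m.factorial : ℝ) / ∏ i, ((l i).factorial : ℝ)) / dirichletMoment α l *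
          dirichletMoment δ l * dirichletMoment γ l := by
  simp_rw [integral_xiK_dirichlet α hδ]
  rw [integral_polynomial_dirichlet hγ]

lemma integral_integral_Qker_dirichlet (α : Fin (k + 1) → ℝ) (hγ : ∀ i, 0 < γ i)
    (hδ : ∀ i, 0 < δ i) (n : ℕ) :
    ∫ x, ∫ y, Qker α n x y ∂dirichlet k δ ∂dirichlet k γ =
      ∑ m ∈ range (n + 1), acoef (∑ i, α i) n m *
        ∫ x, ∫ y, xiK α m x y ∂dirichlet k δ ∂dirichlet k γ := by
  have hinner (x : Fin (k + 1) → ℝ) : ∫ y, Qker α n x y ∂dirichlet k δ =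
      ∑ m ∈ range (n + 1), acoef (∑ i, α i) n m * ∫ y, xiK α m x y ∂dirichlet k δ := by
    simp only [Qker]
    rw [integral_finsetSum _ fun m _ => (integrable_xiK_dirichlet α hδ m x).const_mul _]
    simp_rw [integral_const_mul]
  simp_rw [hinner]
  rw [integral_finsetSum _ fun m _ =>
    (integrable_integral_xiK_dirichlet α hγ hδ m).const_mul _]
  simp_rw [integral_const_mul]

theorem integral_integral_xiK_dirichlet_eq_xiH {α : Fin (k + 1) → ℝ} (hα : ∀ i, 0 < α i)
    (r s : Fin (k + 1) → ℕ) (m : ℕ) :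
    ∫ x, ∫ y, xiK α m x y ∂(dirichlet k fun i => α i + s i)
        ∂(dirichlet k fun i => α i + r i) = xiH α m r s := by
  rw [integral_integral_xiK_dirichlet α (add_natCast_pos hα r) (add_natCast_pos hα s),
    xiH_eq_sum]

end Kernels

theorem stmt_3_general (k : ℕ) (α : Fin (k + 1) → ℝ) (hα : ∀ i, 0 < α i)
    (N : ℕ) (r s : Fin (k + 1) → ℕ) :
    (∀ m : ℕ,
      (∫ x, ∫ y, xiK α m x y ∂(dirichlet k fun i => α i + s i)
          ∂(dirichlet k fun i => α i + r i)) = xiH α m r s) ∧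
    (∀ n : ℕ, n ≤ N →
      Hker α N n r s = (rf ((∑ i, α i) + N) n / ff N n) *
        ∫ x, ∫ y, Qker α n x y ∂(dirichlet k fun i => α i + s i)
          ∂(dirichlet k fun i => α i + r i)) := by
  refine ⟨integral_integral_xiK_dirichlet_eq_xiH hα r s, fun n _ => ?_⟩
  rw [integral_integral_Qker_dirichlet α (add_natCast_pos hα r) (add_natCast_pos hα s), Hker]
  simp_rw [integral_integral_xiK_dirichlet_eq_xiH hα r s]

/-- Hahn kernels as posterior Dirichlet mixtures of Jacobi kernels. -/
theorem stmt_3 (k : ℕ) (hk : 1 ≤ k) (α : Fin (k + 1) → ℝ) (hα : ∀ i, 0 < α i)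
    (N : ℕ) (r s : Fin (k + 1) → ℕ) (hr : ∑ i, r i = N) (hs : ∑ i, s i = N) :
    (∀ m : ℕ,
      (∫ x, ∫ y, xiK α m x y ∂(dirichlet k fun i => α i + s i)
          ∂(dirichlet k fun i => α i + r i)) = xiH α m r s) ∧
    (∀ n : ℕ, n ≤ N →
      Hker α N n r s = (rf ((∑ i, α i) + N) n / ff N n) *
        ∫ x, ∫ y, Qker α n x y ∂(dirichlet k fun i => α i + s i)
          ∂(dirichlet k fun i => α i + r i)) :=
  stmt_3_general k α hα N r s
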